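/- arXiv:2205.01502 — 5 statements merged into one kernel-verified Lean document; each statement's English description precedes it below -/
import Mathlib

section
/- Let $L$ be a field of characteristic $0$, let $\alpha_1,\ldots,\alpha_n \in L$ be pairwise distinct with $n$ odd, let $P(X) = \prod_j (X - \alpha_j)$ and $P_k(X) = \prod_{j \neq k}(X - \alpha_j)$. Suppose $\lambda_1,\ldots,\lambda_n \in L$ satisfy $\sum_{i \neq j} \lambda_i / (\alpha_i - \alpha_j) = 0$ for every $j$. Set $R = \sum_j \lambda_j P_j$ and $Q = -\sum_j \lambda_j^2 P_j$. Then $P Q' - P' Q = R^2$ in $L[X]$, where primes denote formal derivatives. -/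
/-!
Write `Pⱼ = P / (X - αⱼ)`. From `P = (X - αⱼ) Pⱼ` one gets `P' Pⱼ - P Pⱼ' = Pⱼ²`, so by
bilinearity of the Wronskian `P Q' - P' Q = ∑ λⱼ² Pⱼ²`, which is the diagonal part of `R²`.
The off-diagonal part `∑_{i ≠ j} λᵢ λⱼ Pᵢ Pⱼ` vanishes: `P (Pᵢ - Pⱼ) = (αᵢ - αⱼ) Pᵢ Pⱼ` turns it
into a combination of the `P Pⱼ` whose coefficients are `λⱼ ∑_{i ≠ j} λᵢ / (αᵢ - αⱼ) = 0`.
-/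

open Polynomial Lagrange Finset

theorem Finset.sq_sum_eq_sum_sq_add_sum_sum_erase {ι R : Type*} [CommSemiring R] [DecidableEq ι]
    (s : Finset ι) (a : ι → R) :
    (∑ j ∈ s, a j) ^ 2 = ∑ j ∈ s, a j ^ 2 + ∑ j ∈ s, ∑ i ∈ s.erase j, a i * a j := by
  rw [sq, sum_mul_sum, sum_comm, ← sum_add_distrib]
  refine sum_congr rfl fun j hj => ?_
  rw [← add_sum_erase s _ hj, sq]

theorem Finset.sum_sum_erase_comm {ι M : Type*} [AddCommMonoid M] [DecidableEq ι]
    (s : Finset ι) (f : ι → ι → M) :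
    ∑ j ∈ s, ∑ i ∈ s.erase j, f i j = ∑ j ∈ s, ∑ i ∈ s.erase j, f j i :=
  sum_comm' fun j i => by simp only [mem_erase]; tauto

section Nodal

variable {ι : Type*} [DecidableEq ι] {s : Finset ι} {i j : ι}

theorem nodal_mul_sub_nodal_erase {R : Type*} [CommRing R] (v : ι → R) (hi : i ∈ s)
    (hj : j ∈ s) :
    nodal s v * (nodal (s.erase i) v - nodal (s.erase j) v) =
      C (v i - v j) * (nodal (s.erase i) v * nodal (s.erase j) v) := by
  rw [C_sub]
  linear_combination nodal (s.erase i) v * nodal_eq_mul_nodal_erase (v := v) hj -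
    nodal (s.erase j) v * nodal_eq_mul_nodal_erase (v := v) hi

theorem wronskian_nodal_nodal_erase {R : Type*} [CommRing R] (v : ι → R) (hj : j ∈ s) :
    wronskian (nodal s v) (nodal (s.erase j) v) = -nodal (s.erase j) v ^ 2 := by
  rw [wronskian, nodal_eq_mul_nodal_erase hj, derivative_mul]
  simp only [derivative_sub, derivative_X, derivative_C, sub_zero, one_mul]
  ring

theorem wronskian_nodal_sum_C_mul_nodal_erase {R : Type*} [CommRing R] (v : ι → R)
    (c : ι → R) :
    wronskian (nodal s v) (∑ j ∈ s, C (c j) * nodal (s.erase j) v) =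
      -∑ j ∈ s, C (c j) * nodal (s.erase j) v ^ 2 := by
  rw [← wronskianBilin_apply, map_sum, ← sum_neg_distrib]
  refine sum_congr rfl fun j hj => ?_
  rw [← smul_eq_C_mul, map_smul, wronskianBilin_apply, wronskian_nodal_nodal_erase v hj,
    smul_eq_C_mul, mul_neg]

theorem sum_sum_erase_C_mul_nodal_erase_mul_eq_zero {F : Type*} [Field F] {v : ι → F}
    (hv : Set.InjOn v s) (l : ι → F) (hl : ∀ j ∈ s, ∑ i ∈ s.erase j, l i / (v i - v j) = 0) :
    ∑ j ∈ s, ∑ i ∈ s.erase j,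
      C (l i) * nodal (s.erase i) v * (C (l j) * nodal (s.erase j) v) = 0 := by
  set f : ι → ι → F[X] := fun j i =>
    C (l j * (l i / (v i - v j))) * (nodal s v * nodal (s.erase j) v)
  have hf : ∀ j ∈ s, ∑ i ∈ s.erase j, f j i = 0 := fun j hj => by
    simp only [f, ← sum_mul, ← map_sum, ← mul_sum, hl j hj, mul_zero, map_zero, zero_mul]
  have hterm : ∀ j ∈ s, ∀ i ∈ s.erase j,
      C (l i) * nodal (s.erase i) v * (C (l j) * nodal (s.erase j) v) = -(f j i + f i j) := by
    intro j hj i hi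
    obtain ⟨hij, hi⟩ := mem_erase.1 hi
    have hne : v i - v j ≠ 0 := sub_ne_zero.2 (hv.ne hi hj hij)
    set a := l i * l j / (v i - v j)
    have hCC : C (l i) * C (l j) = C a * C (v i - v j) := by
      rw [← C_mul, ← C_mul, div_mul_cancel₀ _ hne]
    have hcoef : l i * (l j / (v j - v i)) = -a := by
      rw [show v j - v i = -(v i - v j) by ring, div_neg]
      ring
    simp only [f, hcoef, map_neg, show l j * (l i / (v i - v j)) = a by ring]
    linear_combination (nodal (s.erase i) v * nodal (s.erase j) v) * hCC -
      C a * nodal_mul_sub_nodal_erase v hi hj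
  calc ∑ j ∈ s, ∑ i ∈ s.erase j, C (l i) * nodal (s.erase i) v * (C (l j) * nodal (s.erase j) v)
      = -(∑ j ∈ s, ∑ i ∈ s.erase j, f j i + ∑ j ∈ s, ∑ i ∈ s.erase j, f i j) := by
        rw [← sum_add_distrib, ← sum_neg_distrib]
        refine sum_congr rfl fun j hj => ?_
        rw [← sum_add_distrib, ← sum_neg_distrib]
        exact sum_congr rfl (hterm j hj)
    _ = 0 := by rw [sum_sum_erase_comm s f, sum_eq_zero hf, add_zero, neg_zero]

end Nodal

theorem stmt4_general {L : Type*} [Field L] {n : ℕ}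
    (α : Fin n → L) (hα : Function.Injective α)
    (P : L[X]) (hP : P = ∏ j, (X - C (α j)))
    (Pk : Fin n → L[X]) (hPk : ∀ k, Pk k = ∏ j ∈ Finset.univ.erase k, (X - C (α j)))
    (l : Fin n → L)
    (hl : ∀ j, ∑ i ∈ Finset.univ.erase j, l i / (α i - α j) = 0)
    (R Q : L[X])
    (hR : R = ∑ j, C (l j) * Pk j)
    (hQ : Q = -∑ j, C (l j ^ 2) * Pk j) :
    P * derivative Q - derivative P * Q = R ^ 2 := by
  obtain rfl : Pk = fun k => nodal (univ.erase k) α := funext hPk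
  rw [← nodal_eq] at hP
  subst hP hR hQ
  rw [← wronskian, wronskian_neg_right, wronskian_nodal_sum_C_mul_nodal_erase, neg_neg,
    sq_sum_eq_sum_sq_add_sum_sum_erase,
    sum_sum_erase_C_mul_nodal_erase_mul_eq_zero hα.injOn l fun j _ => hl j, add_zero]
  simp only [mul_pow, C_pow]

theorem stmt4 {L : Type*} [Field L] [CharZero L] {n : ℕ} (hn : Odd n)
    (α : Fin n → L) (hα : Function.Injective α)
    (P : L[X]) (hP : P = ∏ j, (X - C (α j)))
    (Pk : Fin n → L[X]) (hPk : ∀ k, Pk k = ∏ j ∈ Finset.univ.erase k, (X - C (α j)))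
    (l : Fin n → L)
    (hl : ∀ j, ∑ i ∈ Finset.univ.erase j, l i / (α i - α j) = 0)
    (R Q : L[X])
    (hR : R = ∑ j, C (l j) * Pk j)
    (hQ : Q = -∑ j, C (l j ^ 2) * Pk j) :
    P * derivative Q - derivative P * Q = R ^ 2 :=
  stmt4_general α hα P hP Pk hPk l hl R Q hR hQ
end

section
/- Let $L/K$ be a finite Galois extension of fields and let $V \neq \{0\}$ be an $L$-vector space equipped with a semilinear action of $G = \mathrm{Gal}(L/K)$, i.e. $\sigma(x+y) = \sigma(x) + \sigma(y)$ and $\sigma(\lambda x) = \sigma(\lambda)\sigma(x)$ for all $\sigma \in G$, $x, y \in V$, $\lambda \in L$. Then the fixed subspace $V^G = \{v \in V : \sigma(v) = v \text{ for all } \sigma \in G\}$ is nonzero. -/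
/-!
For `v ≠ 0`, the twisted traces `∑ g, (g • l) • g • v` (`l : L`) are fixed by `G`, and they cannot
all vanish: applying a linear functional `φ` would give a linear relation `∑ g, φ (g • v) • g = 0`
between the automorphisms `g : L → L`, so by Dedekind's independence of characters `φ v = 0` for
every `φ`, i.e. `v = 0`.
-/

open Module

theorem linearIndependent_smul_fun (G L : Type*) [Monoid G] [CommRing L] [IsDomain L]
    [MulSemiringAction G L] [FaithfulSMul G L] :
    LinearIndependent L (fun (g : G) (l : L) => g • l) :=
  (linearIndependent_monoidHom L L).comp (fun g : G => (MulSemiringAction.toRingHom G L g : L →* L))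
    fun _ _ h => eq_of_smul_eq_smul fun l => DFunLike.congr_fun h l

section TwistedTrace

variable (G : Type*) {L V : Type*} [Group G] [Fintype G] [Field L] [MulSemiringAction G L]
  [AddCommGroup V] [Module L V] [DistribMulAction G V]

def twistedTrace (l : L) (v : V) : V :=
  ∑ g : G, (g • l) • g • v

variable {G}

theorem smul_twistedTrace (hsemi : ∀ (g : G) (l : L) (v : V), g • l • v = (g • l) • g • v)
    (h : G) (l : L) (v : V) : h • twistedTrace G l v = twistedTrace G l v := by
  simp only [twistedTrace, Finset.smul_sum, hsemi, smul_smul]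
  exact Fintype.sum_equiv (Equiv.mulLeft h) _ _ fun g => by simp [mul_smul]

theorem eq_zero_of_forall_twistedTrace_eq_zero [FaithfulSMul G L] {v : V}
    (hv : ∀ l : L, twistedTrace G l v = 0) : v = 0 := by
  refine (forall_dual_apply_eq_zero_iff L v).mp fun φ => ?_
  have hrel : ∑ g : G, φ (g • v) • (fun l : L => g • l) = 0 := by
    funext l
    simpa [twistedTrace, mul_comm] using congrArg φ (hv l)
  simpa using Fintype.linearIndependent_iff.mp (linearIndependent_smul_fun G L) _ hrel 1

theorem exists_ne_zero_forall_smul_eq [FaithfulSMul G L] [Nontrivial V]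
    (hsemi : ∀ (g : G) (l : L) (v : V), g • l • v = (g • l) • g • v) :
    ∃ v : V, v ≠ 0 ∧ ∀ g : G, g • v = v := by
  obtain ⟨v, hv⟩ := exists_ne (0 : V)
  obtain ⟨l, hl⟩ : ∃ l : L, twistedTrace G l v ≠ 0 := by
    by_contra! h
    exact hv (eq_zero_of_forall_twistedTrace_eq_zero h)
  exact ⟨twistedTrace G l v, hl, fun g => smul_twistedTrace hsemi g l v⟩

end TwistedTrace

theorem stmt5_general {K L : Type*} [Field K] [Field L] [Algebra K L]
    [FiniteDimensional K L]
    {V : Type*} [AddCommGroup V] [Module L V] [Nontrivial V]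
    (act : (L ≃ₐ[K] L) → V → V)
    (hadd : ∀ σ x y, act σ (x + y) = act σ x + act σ y)
    (hsmul : ∀ σ (l : L) x, act σ (l • x) = σ l • act σ x)
    (hone : ∀ x, act 1 x = x)
    (hmul : ∀ σ τ x, act (σ * τ) x = act σ (act τ x)) :
    ∃ v : V, v ≠ 0 ∧ ∀ σ, act σ v = v := by
  let : DistribMulAction (L ≃ₐ[K] L) V :=
    { smul := act
      one_smul := hone
      mul_smul := hmul
      smul_add := hadd
      smul_zero := fun σ => (by simpa using hadd σ 0 0 : act σ 0 = 0) }
  exact exists_ne_zero_forall_smul_eq hsmul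

theorem stmt5 {K L : Type*} [Field K] [Field L] [Algebra K L]
    [FiniteDimensional K L] [IsGalois K L]
    {V : Type*} [AddCommGroup V] [Module L V] [Nontrivial V]
    (act : (L ≃ₐ[K] L) → V → V)
    (hadd : ∀ σ x y, act σ (x + y) = act σ x + act σ y)
    (hsmul : ∀ σ (l : L) x, act σ (l • x) = σ l • act σ x)
    (hone : ∀ x, act 1 x = x)
    (hmul : ∀ σ τ x, act (σ * τ) x = act σ (act τ x)) :
    ∃ v : V, v ≠ 0 ∧ ∀ σ, act σ v = v :=
  stmt5_general act hadd hsmul hone hmul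
end

section
/- Let $K$ be a field of characteristic $0$, let $P \in K[X]$ be a monic irreducible polynomial of odd degree $n$, and suppose $Q, R \in K[X]$ are nonzero of degree at most $n-1$, with $PQ' - P'Q = R^2$. Then for every $t \in K$, the element $(-1)^{(n+1)/2} \, \mathrm{Res}(P, Q) \cdot \Delta(P - tQ)$ is a square in $K$, where $\mathrm{Res}$ denotes the resultant and $\Delta$ the discriminant. -/
/-!
`polyRes` is the image of Mathlib's Sylvester resultant, so everything lives in `K`. The
polynomial `F = P - tQ` is monic of degree `n`, `Res(P, Q) = Res(F, Q)`, and the Wronskian is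
unchanged: `W(F, Q) = W(P, Q) = R²`. Hence `Q F' ≡ -R² (mod F)`, and since `Res(F, ·)` is
multiplicative and invariant under adding multiples of `F`,
`Res(F, Q) Res(F, F') = (-1)ⁿ Res(F, R)²`. For odd `n` the signs cancel.
-/

open Polynomial

/-- The resultant of two polynomials over a field `K`, computed via the roots of the first
polynomial in an algebraic closure: `Res(f,g) = lc(f)^(deg g) * ∏_{f(α)=0} g(α)`. -/
noncomputable def polyRes {K : Type*} [Field K] (f g : K[X]) : AlgebraicClosure K :=
  algebraMap K (AlgebraicClosure K) f.leadingCoeff ^ g.natDegree *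
    (((f.map (algebraMap K (AlgebraicClosure K))).roots).map fun α => aeval α g).prod

/-- The discriminant of a polynomial over a field `K`:
`Δ(f) = (-1)^(n(n-1)/2) Res(f, f') / lc(f)`. -/
noncomputable def polyDisc {K : Type*} [Field K] (f : K[X]) : AlgebraicClosure K :=
  (-1) ^ (f.natDegree * (f.natDegree - 1) / 2) *
    (algebraMap K (AlgebraicClosure K) f.leadingCoeff)⁻¹ * polyRes f (derivative f)

theorem Odd.even_succ_div_two_add_mul_pred_div_two_add_self {n : ℕ} (hn : Odd n) :
    Even ((n + 1) / 2 + n * (n - 1) / 2 + n) := by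
  obtain ⟨k, rfl⟩ := hn
  have h1 : (2 * k + 1 + 1) / 2 = k + 1 := by omega
  have h2 : (2 * k + 1) * (2 * k + 1 - 1) / 2 = (2 * k + 1) * k := by
    rw [Nat.add_sub_cancel, mul_left_comm, Nat.mul_div_cancel_left _ two_pos]
  rw [h1, h2]
  exact ⟨(k + 1) * (k + 1), by ring⟩

namespace Polynomial

variable {A : Type*} [CommRing A]

theorem resultant_neg_right (f g : A[X]) :
    resultant f (-g) = (-1) ^ f.natDegree * resultant f g := by
  rw [← natDegree_neg g, neg_eq_neg_one_mul, ← C_1, ← C_neg, resultant_C_mul_right,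
    natDegree_C_mul_of_isUnit isUnit_one.neg]

theorem resultant_sub_C_mul_left {P Q : A[X]} (t : A) (h : Q.natDegree < P.natDegree) :
    resultant (P - C t * Q) Q = resultant P Q := by
  have hdeg : (P - C t * Q).natDegree = P.natDegree :=
    natDegree_sub_eq_left_of_natDegree_lt ((natDegree_C_mul_le t Q).trans_lt h)
  rw [show P - C t * Q = P + Q * -C t by ring] at hdeg ⊢
  rw [hdeg]
  exact resultant_add_mul_left _ _ _ _ _ (by simpa using h.le) le_rfl

theorem wronskian_sub_C_mul_left (P Q : A[X]) (t : A) :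
    wronskian (P - C t * Q) Q = wronskian P Q := by
  simp only [wronskian, derivative_sub, derivative_C_mul]
  ring

namespace Monic

variable {f : A[X]}

theorem resultant_eq_of_natDegree_le (hf : f.Monic) {g : A[X]} {n : ℕ} (hg : g.natDegree ≤ n) :
    resultant f g f.natDegree n = resultant f g := by
  obtain ⟨k, rfl⟩ := Nat.exists_eq_add_of_le hg
  rw [resultant_add_right_deg _ _ _ _ _ le_rfl, hf.coeff_natDegree, one_pow, one_mul]

theorem resultant_add_mul_right (hf : f.Monic) (g p : A[X]) :
    resultant f (g + f * p) = resultant f g := by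
  set N := (g + f * p).natDegree + g.natDegree + p.natDegree + f.natDegree
  rw [← hf.resultant_eq_of_natDegree_le (n := N) (by omega),
    ← hf.resultant_eq_of_natDegree_le (g := g) (n := N) (by omega),
    Polynomial.resultant_add_mul_right _ _ _ _ _ (by omega) le_rfl]

theorem resultant_mul_right (hf : f.Monic) (g h : A[X]) :
    resultant f (g * h) = resultant f g * resultant f h := by
  rw [← Polynomial.resultant_mul_right _ _ _ _ le_rfl,
    hf.resultant_eq_of_natDegree_le natDegree_mul_le]

theorem resultant_mul_resultant_derivative (hf : f.Monic) {Q R : A[X]}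
    (hW : wronskian f Q = R ^ 2) :
    resultant f Q * resultant f (derivative f) = (-1) ^ f.natDegree * resultant f R ^ 2 := by
  have hQf : Q * derivative f = -R ^ 2 + f * derivative Q := by
    rw [← hW, wronskian]; ring
  rw [← hf.resultant_mul_right, hQf, hf.resultant_add_mul_right, resultant_neg_right, sq,
    hf.resultant_mul_right, sq]

theorem resultant_mul_signed_resultant_derivative_eq_sq (hf : f.Monic) (hodd : Odd f.natDegree)
    {Q R : A[X]} (hW : wronskian f Q = R ^ 2) :
    (-1) ^ ((f.natDegree + 1) / 2) * resultant f Q *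
        ((-1) ^ (f.natDegree * (f.natDegree - 1) / 2) * resultant f (derivative f)) =
      resultant f R ^ 2 := by
  have key := hf.resultant_mul_resultant_derivative hW
  set n := f.natDegree
  calc _ = (-1) ^ ((n + 1) / 2 + n * (n - 1) / 2 + n) * resultant f R ^ 2 := by
        rw [pow_add, pow_add]
        linear_combination ((-1) ^ ((n + 1) / 2) * (-1) ^ (n * (n - 1) / 2)) * key
    _ = resultant f R ^ 2 := by
        rw [hodd.even_succ_div_two_add_mul_pred_div_two_add_self.neg_one_pow, one_mul]

end Monic

end Polynomial

section AlgebraicClosure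

variable {K : Type*} [Field K]

theorem polyRes_eq_algebraMap_resultant (f g : K[X]) :
    polyRes f g = algebraMap K (AlgebraicClosure K) (resultant f g) := by
  have hφ := (algebraMap K (AlgebraicClosure K)).injective
  rw [← resultant_map_map, ← natDegree_map_eq_of_injective hφ f,
    resultant_eq_prod_eval _ _ _ natDegree_map_le (IsAlgClosed.splits _), polyRes,
    leadingCoeff_map_of_injective hφ]
  simp [aeval_def, eval_map]

theorem polyDisc_eq_algebraMap_of_monic {f : K[X]} (hf : f.Monic) :
    polyDisc f = algebraMap K (AlgebraicClosure K)
      ((-1) ^ (f.natDegree * (f.natDegree - 1) / 2) * resultant f (derivative f)) := by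
  simp [polyDisc, polyRes_eq_algebraMap_resultant, hf.leadingCoeff]

end AlgebraicClosure

theorem stmt6_general {K : Type*} [Field K] {n : ℕ} (hn : Odd n)
    (P Q R : K[X]) (hPm : P.Monic) (hPdeg : P.natDegree = n)
    (hQdeg : Q.natDegree ≤ n - 1)
    (hW : P * derivative Q - derivative P * Q = R ^ 2) :
    ∀ t : K, ∃ s : K,
      (-1) ^ ((n + 1) / 2) * polyRes P Q * polyDisc (P - C t * Q) =
        algebraMap K (AlgebraicClosure K) s ^ 2 := by
  intro t
  have hQlt : Q.natDegree < P.natDegree := by have := hn.pos; omega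
  set F := P - C t * Q
  have hCQlt : (C t * Q).natDegree < P.natDegree := (natDegree_C_mul_le t Q).trans_lt hQlt
  have hFdeg : F.natDegree = n := by rw [natDegree_sub_eq_left_of_natDegree_lt hCQlt, hPdeg]
  have hFm : F.Monic := hPm.sub_of_left (degree_lt_degree hCQlt)
  have hRes : resultant F Q = resultant P Q := resultant_sub_C_mul_left t hQlt
  have hWF : wronskian F Q = R ^ 2 := by rw [wronskian_sub_C_mul_left]; exact hW
  refine ⟨resultant F R, ?_⟩
  rw [polyRes_eq_algebraMap_resultant, polyDisc_eq_algebraMap_of_monic hFm, ← hRes, ← hFdeg,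
    ← map_pow, ← hFm.resultant_mul_signed_resultant_derivative_eq_sq (hFdeg ▸ hn) hWF]
  simp only [map_mul, map_pow, map_neg, map_one]

theorem stmt6 {K : Type*} [Field K] [CharZero K] {n : ℕ} (hn : Odd n)
    (P Q R : K[X]) (hPm : P.Monic) (hPirr : Irreducible P) (hPdeg : P.natDegree = n)
    (hQ : Q ≠ 0) (hR : R ≠ 0)
    (hQdeg : Q.natDegree ≤ n - 1) (hRdeg : R.natDegree ≤ n - 1)
    (hW : P * derivative Q - derivative P * Q = R ^ 2) :
    ∀ t : K, ∃ s : K,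
      (-1) ^ ((n + 1) / 2) * polyRes P Q * polyDisc (P - C t * Q) =
        algebraMap K (AlgebraicClosure K) s ^ 2 :=
  stmt6_general hn P Q R hPm hPdeg hQdeg hW
end

section
/- Let $n \geq 4$ be even, and let $P(X) = X^n - n X^{n-1}$, $Q(X) = -nX + (n-2)^2$ in $\mathbb{Q}[X]$. Then, as polynomials in $T$, the discriminant of $P - TQ$ (a degree-$n$ polynomial in $X$ over $\mathbb{Q}(T)$) equals $(-1)^{n/2+1}(n-1)^{n-1} n^n T^{n-2} (T - (n-2)^{n-2})^2$. -/
open Polynomial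

namespace Polynomial.Monic

variable {K : Type*} [Field K] {f : K[X]}

theorem polyRes_eq_prod_aroots (hf : f.Monic) (g : K[X]) :
    polyRes f g = ((f.aroots (AlgebraicClosure K)).map fun α => aeval α g).prod := by
  simp [polyRes, hf.leadingCoeff]

theorem polyRes_mul (hf : f.Monic) (g h : K[X]) :
    polyRes f (g * h) = polyRes f g * polyRes f h := by
  simp only [hf.polyRes_eq_prod_aroots, map_mul, Multiset.prod_map_mul]

theorem polyRes_pow (hf : f.Monic) (g : K[X]) (k : ℕ) :
    polyRes f (g ^ k) = polyRes f g ^ k := by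
  simp only [hf.polyRes_eq_prod_aroots, map_pow, Multiset.prod_map_pow]

theorem polyRes_add_mul_self (hf : f.Monic) (g h : K[X]) :
    polyRes f (g + h * f) = polyRes f g := by
  simp only [hf.polyRes_eq_prod_aroots]
  refine congrArg _ (Multiset.map_congr rfl fun α hα => ?_)
  rw [map_add, map_mul, (mem_aroots'.mp hα).2, mul_zero, add_zero]

theorem polyRes_C (hf : f.Monic) (c : K) :
    polyRes f (C c) = algebraMap K (AlgebraicClosure K) c ^ f.natDegree := by
  simp [hf.polyRes_eq_prod_aroots, IsAlgClosed.card_aroots_eq_natDegree]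

theorem polyRes_X_sub_C (hf : f.Monic) (c : K) :
    polyRes f (X - C c) = algebraMap K (AlgebraicClosure K) ((-1) ^ f.natDegree * f.eval c) := by
  have hsplit := IsAlgClosed.splits (f.map (algebraMap K (AlgebraicClosure K)))
  rw [hf.polyRes_eq_prod_aroots, map_mul, map_pow, map_neg, map_one,
    ← aeval_algebraMap_apply_eq_algebraMap_eval, hsplit.aeval_eq_prod_aroots_of_monic hf,
    ← IsAlgClosed.card_aroots_eq_natDegree (B := AlgebraicClosure K),
    ← Multiset.card_map (fun α => algebraMap K _ c - α), ← Multiset.prod_map_neg,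
    Multiset.map_map]
  simp

theorem polyRes_X (hf : f.Monic) :
    polyRes f X = algebraMap K (AlgebraicClosure K) ((-1) ^ f.natDegree * f.eval 0) := by
  simpa using hf.polyRes_X_sub_C 0

theorem polyDisc_eq (hf : f.Monic) :
    polyDisc f = (-1) ^ (f.natDegree * (f.natDegree - 1) / 2) * polyRes f (derivative f) := by
  simp [polyDisc, hf.leadingCoeff]

theorem polyRes_derivative_mul {P Q : K[X]} {t : K} (hf : (P - C t * Q).Monic) :
    polyRes (P - C t * Q) (derivative (P - C t * Q)) * polyRes (P - C t * Q) Q =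
      polyRes (P - C t * Q) (wronskian Q P) := by
  rw [← hf.polyRes_mul, ← hf.polyRes_add_mul_self (wronskian Q P) (derivative Q)]
  congr 1
  simp only [wronskian, derivative_sub, derivative_C_mul]
  ring

end Polynomial.Monic

section Pencil

variable (K : Type*) [Field K]

noncomputable def pencilP (n : ℕ) : K[X] := X ^ n - C (n : K) * X ^ (n - 1)

noncomputable def pencilQ (n : ℕ) : K[X] := -(C (n : K)) * X + C (((n : K) - 2) ^ 2)

variable {K} {n : ℕ}

theorem monic_pencil (hn : 2 ≤ n) (t : K) : (pencilP K n - C t * pencilQ K n).Monic := by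
  obtain ⟨m, rfl⟩ := Nat.exists_eq_add_of_le' hn
  unfold pencilP pencilQ
  monicity!
  omega

theorem natDegree_pencil (hn : 2 ≤ n) (t : K) :
    (pencilP K n - C t * pencilQ K n).natDegree = n := by
  obtain ⟨m, rfl⟩ := Nat.exists_eq_add_of_le' hn
  unfold pencilP pencilQ
  compute_degree!
  simp

theorem wronskian_pencilQ_pencilP (hn : 2 ≤ n) :
    wronskian (pencilQ K n) (pencilP K n) =
      C (-((n : K) * (n - 1))) * X ^ (n - 2) * (X - C ((n : K) - 2)) ^ 2 := by
  obtain ⟨m, rfl⟩ := Nat.exists_eq_add_of_le' hn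
  simp only [wronskian, pencilP, pencilQ, Nat.add_sub_cancel, show m + 2 - 1 = m + 1 by omega,
    derivative_sub, derivative_add, derivative_mul, derivative_X_pow, derivative_C, derivative_X,
    derivative_neg]
  simp only [map_mul, map_neg, map_sub, map_add, map_natCast, map_ofNat, map_pow, Nat.cast_add,
    Nat.cast_ofNat, Nat.cast_one, C_1]
  ring

theorem pencilQ_eq_C_mul_X_sub_C (hn : (n : K) ≠ 0) :
    pencilQ K n = C (-(n : K)) * (X - C (((n : K) - 2) ^ 2 / n)) := by
  rw [pencilQ, mul_sub, ← C_mul, neg_mul (n : K), mul_div_cancel₀ _ hn, C_neg, C_neg]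
  ring

variable (t : K)

theorem eval_zero_pencil (hn : 2 ≤ n) :
    (pencilP K n - C t * pencilQ K n).eval 0 = -(t * ((n : K) - 2) ^ 2) := by
  obtain ⟨m, rfl⟩ := Nat.exists_eq_add_of_le' hn
  simp [pencilP, pencilQ]

theorem eval_pencil_sub_two (hn : 2 ≤ n) :
    (pencilP K n - C t * pencilQ K n).eval ((n : K) - 2) =
      2 * ((n : K) - 2) * (t - ((n : K) - 2) ^ (n - 2)) := by
  obtain ⟨m, rfl⟩ := Nat.exists_eq_add_of_le' hn
  simp only [pencilP, pencilQ, eval_sub, eval_add, eval_mul, eval_pow, eval_X, eval_C, eval_neg,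
    Nat.add_sub_cancel, show m + 2 - 1 = m + 1 by omega]
  push_cast
  ring

theorem pow_mul_eval_pencil_root_pencilQ (hn : (n : K) ≠ 0) :
    (n : K) ^ n * (pencilP K n - C t * pencilQ K n).eval (((n : K) - 2) ^ 2 / n) =
      -4 * ((n : K) - 1) * ((n : K) - 2) ^ (2 * n - 2) := by
  obtain ⟨m, rfl⟩ := Nat.exists_eq_add_one_of_ne_zero (n := n) (by rintro rfl; simp at hn)
  simp only [pencilP, pencilQ, eval_sub, eval_add, eval_mul, eval_pow, eval_X, eval_C, eval_neg,
    Nat.add_sub_cancel, show 2 * (m + 1) - 2 = 2 * m by omega, pow_mul]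
  generalize ((m + 1 : ℕ) : K) = N at hn ⊢
  have hNσ : N * ((N - 2) ^ 2 / N) = (N - 2) ^ 2 := mul_div_cancel₀ _ hn
  generalize (N - 2) ^ 2 / N = σ at hNσ ⊢
  calc _ = (N * σ) ^ m * (N * σ - N ^ 2) - t * N ^ (m + 1) * (-(N * σ) + (N - 2) ^ 2) := by ring
    _ = _ := by rw [hNσ]; ring

theorem polyRes_pencil_wronskian (hn : 2 ≤ n) (he : Even n) :
    polyRes (pencilP K n - C t * pencilQ K n) (wronskian (pencilQ K n) (pencilP K n)) =
      algebraMap K (AlgebraicClosure K) (4 * (n : K) ^ n * ((n : K) - 1) ^ n *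
        ((n : K) - 2) ^ (2 * n - 2) * t ^ (n - 2) * (t - ((n : K) - 2) ^ (n - 2)) ^ 2) := by
  have hf := monic_pencil hn t
  rw [wronskian_pencilQ_pencilP hn, hf.polyRes_mul, hf.polyRes_mul, hf.polyRes_C, hf.polyRes_pow,
    hf.polyRes_pow, hf.polyRes_X, hf.polyRes_X_sub_C, natDegree_pencil hn, eval_zero_pencil t hn,
    eval_pencil_sub_two t hn, he.neg_one_pow, ← map_pow, ← map_pow, ← map_pow, ← map_mul,
    ← map_mul]
  congr 1
  obtain ⟨m, rfl⟩ := Nat.exists_eq_add_of_le' hn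
  have hme : Even m := by simpa [Nat.even_add] using he
  rw [he.neg_pow, one_mul, one_mul, Nat.add_sub_cancel, hme.neg_pow, mul_pow, mul_pow, ← pow_mul,
    show 2 * (m + 2) - 2 = 2 * m + 2 by omega]
  generalize ((m + 2 : ℕ) : K) - 2 = u
  ring

variable [CharZero K]

theorem polyRes_pencil_pencilQ (hn : 2 ≤ n) :
    polyRes (pencilP K n - C t * pencilQ K n) (pencilQ K n) =
      algebraMap K (AlgebraicClosure K) (-4 * ((n : K) - 1) * ((n : K) - 2) ^ (2 * n - 2)) := by
  have hf := monic_pencil hn t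
  have hn0 : (n : K) ≠ 0 := Nat.cast_ne_zero.mpr (by omega)
  nth_rw 2 [pencilQ_eq_C_mul_X_sub_C hn0]
  rw [hf.polyRes_mul, hf.polyRes_C, hf.polyRes_X_sub_C,
    natDegree_pencil hn, ← pow_mul_eval_pencil_root_pencilQ t hn0, ← map_pow, ← map_mul,
    ← mul_assoc, ← mul_pow, neg_mul_neg, mul_one]

theorem polyRes_pencil_derivative (hn : 4 ≤ n) (he : Even n) :
    polyRes (pencilP K n - C t * pencilQ K n) (derivative (pencilP K n - C t * pencilQ K n)) =
      algebraMap K (AlgebraicClosure K)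
        (-(((n : K) - 1) ^ (n - 1) * (n : K) ^ n * t ^ (n - 2) *
          (t - ((n : K) - 2) ^ (n - 2)) ^ 2)) := by
  have key := (monic_pencil (K := K) (n := n) (by omega) t).polyRes_derivative_mul
  rw [polyRes_pencil_pencilQ t (by omega), polyRes_pencil_wronskian t (by omega) he] at key
  have hn1 : (n : K) - 1 ≠ 0 := sub_ne_zero.mpr (by exact_mod_cast (by omega : n ≠ 1))
  have hn2 : (n : K) - 2 ≠ 0 := sub_ne_zero.mpr (by exact_mod_cast (by omega : n ≠ 2))
  have hres : -4 * ((n : K) - 1) * ((n : K) - 2) ^ (2 * n - 2) ≠ 0 :=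
    mul_ne_zero (mul_ne_zero (by norm_num) hn1) (pow_ne_zero _ hn2)
  rw [eq_div_of_mul_eq ((_root_.map_ne_zero _).mpr hres) key, ← map_div₀]
  congr 1
  rw [div_eq_iff hres]
  obtain ⟨m, rfl⟩ := Nat.exists_eq_add_of_le' (by omega : 1 ≤ n)
  rw [Nat.add_sub_cancel]
  ring

theorem polyDisc_pencil (hn : 4 ≤ n) (he : Even n) :
    polyDisc (pencilP K n - C t * pencilQ K n) =
      algebraMap K (AlgebraicClosure K)
        ((-1) ^ (n / 2 + 1) * ((n : K) - 1) ^ (n - 1) * (n : K) ^ n *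
          t ^ (n - 2) * (t - ((n : K) - 2) ^ (n - 2)) ^ 2) := by
  rw [(monic_pencil (by omega) t).polyDisc_eq, natDegree_pencil (by omega),
    polyRes_pencil_derivative t hn he]
  obtain ⟨k, rfl⟩ := he
  have hexp : (k + k) * (k + k - 1) / 2 = (k + k - 1) * k := by
    rw [show (k + k) * (k + k - 1) = 2 * ((k + k - 1) * k) by ring,
      Nat.mul_div_cancel_left _ two_pos]
  rw [hexp, pow_mul, Odd.neg_one_pow ⟨k - 1, by omega⟩, show (k + k) / 2 + 1 = k + 1 by omega,
    ← map_one (algebraMap K (AlgebraicClosure K)), ← map_neg, ← map_pow, ← map_mul]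
  congr 1
  ring

end Pencil

theorem stmt9 {n : ℕ} (hn : 4 ≤ n) (hne : Even n)
    (P Q : (RatFunc ℚ)[X])
    (hP : P = X ^ n - C (n : RatFunc ℚ) * X ^ (n - 1))
    (hQ : Q = -(C (n : RatFunc ℚ)) * X + C (((n : RatFunc ℚ) - 2) ^ 2)) :
    polyDisc (P - C RatFunc.X * Q) =
      algebraMap (RatFunc ℚ) (AlgebraicClosure (RatFunc ℚ))
        ((-1) ^ (n / 2 + 1) * ((n : RatFunc ℚ) - 1) ^ (n - 1) * (n : RatFunc ℚ) ^ n *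
          RatFunc.X ^ (n - 2) * (RatFunc.X - ((n : RatFunc ℚ) - 2) ^ (n - 2)) ^ 2) := by
  subst hP hQ
  exact polyDisc_pencil RatFunc.X hn hne
end

section
/- Let $K$ be a field of characteristic $0$ and let $k, m \in K$. The discriminant (in $X$) of the polynomial $X^4 - 2kX^2 - 8mX + k^2 - T(X^3 + kX + m) \in K(T)[X]$ equals $(-4k^3 - 27m^2)\,(T^3 + 16kT + 64m)^2$. -/
/-!
Over an algebraic closure the monic quartic splits as `∏ (X - rᵢ)`, so its discriminant
`∏ f'(rᵢ)` is the squared difference product of the roots; by Vieta this is the classical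
polynomial `quarticDisc` in the coefficients. For the quartic of the theorem the coefficients are
`-T, -2k, -(8m + kT), k² - mT`, and `quarticDisc` of these factors as claimed.
-/

open Polynomial

theorem Multiset.exists_eq_of_card_eq_four {α : Type*} {s : Multiset α}
    (h : Multiset.card s = 4) : ∃ a b c d, s = {a, b, c, d} := by
  obtain ⟨a, ha⟩ := Multiset.card_pos_iff_exists_mem.mp (by omega : 0 < Multiset.card s)
  obtain ⟨t, rfl⟩ := Multiset.exists_cons_of_mem ha
  obtain ⟨b, c, d, rfl⟩ := Multiset.card_eq_three.mp (by simpa using h)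
  exact ⟨a, b, c, d, rfl⟩

/-- The discriminant of the monic quartic `X^4 + b X^3 + c X^2 + d X + e`. -/
def quarticDisc {R : Type*} [CommRing R] (b c d e : R) : R :=
  256 * e ^ 3 - 192 * b * d * e ^ 2 - 128 * c ^ 2 * e ^ 2 + 144 * c * d ^ 2 * e - 27 * d ^ 4
    + 144 * b ^ 2 * c * e ^ 2 - 6 * b ^ 2 * d ^ 2 * e - 80 * b * c ^ 2 * d * e
    + 18 * b * c * d ^ 3 + 16 * c ^ 4 * e - 4 * c ^ 3 * d ^ 2 - 27 * b ^ 4 * e ^ 2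
    + 18 * b ^ 3 * c * d * e - 4 * b ^ 3 * d ^ 3 - 4 * b ^ 2 * c ^ 3 * e + b ^ 2 * c ^ 2 * d ^ 2

section CommRing

variable {R S : Type*} [CommRing R] [CommRing S]

theorem map_quarticDisc (φ : R →+* S) (b c d e : R) :
    φ (quarticDisc b c d e) = quarticDisc (φ b) (φ c) (φ d) (φ e) := by
  simp only [quarticDisc, map_add, map_sub, map_mul, map_pow, map_ofNat]

theorem quarticDisc_esymm (r₁ r₂ r₃ r₄ : R) :
    quarticDisc (-(r₁ + r₂ + r₃ + r₄))
        (r₁ * r₂ + r₁ * r₃ + r₁ * r₄ + r₂ * r₃ + r₂ * r₄ + r₃ * r₄)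
        (-(r₁ * r₂ * r₃ + r₁ * r₂ * r₄ + r₁ * r₃ * r₄ + r₂ * r₃ * r₄)) (r₁ * r₂ * r₃ * r₄) =
      ((r₁ - r₂) * (r₁ - r₃) * (r₁ - r₄) * (r₂ - r₃) * (r₂ - r₄) * (r₃ - r₄)) ^ 2 := by
  unfold quarticDisc
  ring

theorem quartic_coeffs_of_eq_prod_X_sub_C {b c d e r₁ r₂ r₃ r₄ : R}
    (h : X ^ 4 + C b * X ^ 3 + C c * X ^ 2 + C d * X + C e =
      (X - C r₁) * (X - C r₂) * (X - C r₃) * (X - C r₄)) :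
    b = -(r₁ + r₂ + r₃ + r₄) ∧
      c = r₁ * r₂ + r₁ * r₃ + r₁ * r₄ + r₂ * r₃ + r₂ * r₄ + r₃ * r₄ ∧
      d = -(r₁ * r₂ * r₃ + r₁ * r₂ * r₄ + r₁ * r₃ * r₄ + r₂ * r₃ * r₄) ∧
      e = r₁ * r₂ * r₃ * r₄ := by
  rw [show (X - C r₁) * (X - C r₂) * (X - C r₃) * (X - C r₄) =
      X ^ 4 + C (-(r₁ + r₂ + r₃ + r₄)) * X ^ 3
        + C (r₁ * r₂ + r₁ * r₃ + r₁ * r₄ + r₂ * r₃ + r₂ * r₄ + r₃ * r₄) * X ^ 2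
        + C (-(r₁ * r₂ * r₃ + r₁ * r₂ * r₄ + r₁ * r₃ * r₄ + r₂ * r₃ * r₄)) * X
        + C (r₁ * r₂ * r₃ * r₄) by simp only [map_add, map_mul, map_neg]; ring] at h
  have hcoeff (n : ℕ) := congrArg (coeff · n) h
  simp only [coeff_add, coeff_C_mul, coeff_X_pow, coeff_X, coeff_C] at hcoeff
  exact ⟨by simpa using hcoeff 3, by simpa using hcoeff 2, by simpa using hcoeff 1,
    by simpa using hcoeff 0⟩

end CommRing

section Field

variable {F : Type*} [Field F]

theorem polyDisc_of_monic {f : F[X]} (hf : f.Monic) :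
    polyDisc f = (-1) ^ (f.natDegree * (f.natDegree - 1) / 2) *
      ((f.map (algebraMap F (AlgebraicClosure F))).roots.map
        fun α => aeval α (derivative f)).prod := by
  simp [polyDisc, polyRes, hf.leadingCoeff]

theorem polyDisc_quartic (b c d e : F) :
    polyDisc (X ^ 4 + C b * X ^ 3 + C c * X ^ 2 + C d * X + C e) =
      algebraMap F (AlgebraicClosure F) (quarticDisc b c d e) := by
  set f : F[X] := X ^ 4 + C b * X ^ 3 + C c * X ^ 2 + C d * X + C e with hf
  set φ := algebraMap F (AlgebraicClosure F)
  have hmonic : f.Monic := by rw [hf]; monicity!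
  have hdeg : f.natDegree = 4 := by rw [hf]; compute_degree!
  have hsplit : (f.map φ).Splits := IsAlgClosed.splits _
  obtain ⟨r₁, r₂, r₃, r₄, hroots⟩ := Multiset.exists_eq_of_card_eq_four <| by
    rw [← hsplit.natDegree_eq_card_roots, natDegree_map, hdeg]
  have hprod : f.map φ = (X - C r₁) * (X - C r₂) * (X - C r₃) * (X - C r₄) := by
    rw [hsplit.eq_prod_roots_of_monic (hmonic.map φ), hroots]
    simp [mul_assoc]
  have hmap : f.map φ = X ^ 4 + C (φ b) * X ^ 3 + C (φ c) * X ^ 2 + C (φ d) * X + C (φ e) := by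
    simp only [hf, Polynomial.map_add, Polynomial.map_mul, Polynomial.map_pow, map_X, map_C]
  obtain ⟨hb, hc, hd, he⟩ := quartic_coeffs_of_eq_prod_X_sub_C (hmap.symm.trans hprod)
  have hderiv (α : AlgebraicClosure F) : aeval α (derivative f) =
      eval α (derivative ((X - C r₁) * (X - C r₂) * (X - C r₃) * (X - C r₄))) := by
    rw [← hprod, derivative_map, eval_map_algebraMap]
  rw [polyDisc_of_monic hmonic, hdeg, hroots, map_quarticDisc, hb, hc, hd, he, quarticDisc_esymm]
  simp only [hderiv, Multiset.insert_eq_cons, Multiset.map_cons, Multiset.map_singleton,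
    Multiset.prod_cons, Multiset.prod_singleton]
  simp only [derivative_mul, derivative_sub, derivative_X, derivative_C, eval_mul, eval_add,
    eval_sub, eval_X, eval_C, eval_one, eval_zero]
  ring

end Field

theorem stmt19_general {K : Type*} [Field K] (k m : K) :
    polyDisc
        (X ^ 4 - C (2 * algebraMap K (RatFunc K) k) * X ^ 2 -
          C (8 * algebraMap K (RatFunc K) m) * X + C (algebraMap K (RatFunc K) k ^ 2) -
          C RatFunc.X *
            (X ^ 3 + C (algebraMap K (RatFunc K) k) * X + C (algebraMap K (RatFunc K) m))) =
      algebraMap (RatFunc K) (AlgebraicClosure (RatFunc K))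
        ((-4 * algebraMap K (RatFunc K) k ^ 3 - 27 * algebraMap K (RatFunc K) m ^ 2) *
          (RatFunc.X ^ 3 + 16 * algebraMap K (RatFunc K) k * RatFunc.X +
              64 * algebraMap K (RatFunc K) m) ^ 2) := by
  set κ := algebraMap K (RatFunc K) k
  set μ := algebraMap K (RatFunc K) m
  set T : RatFunc K := RatFunc.X
  have hquartic : X ^ 4 - C (2 * κ) * X ^ 2 - C (8 * μ) * X + C (κ ^ 2) -
        C T * (X ^ 3 + C κ * X + C μ) =
      X ^ 4 + C (-T) * X ^ 3 + C (-(2 * κ)) * X ^ 2 + C (-(8 * μ + κ * T)) * X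
        + C (κ ^ 2 - μ * T) := by
    simp only [map_add, map_mul, map_sub, map_neg]
    ring
  rw [hquartic, polyDisc_quartic]
  congr 1
  unfold quarticDisc
  ring

theorem stmt19 {K : Type*} [Field K] [CharZero K] (k m : K) :
    polyDisc
        (X ^ 4 - C (2 * algebraMap K (RatFunc K) k) * X ^ 2 -
          C (8 * algebraMap K (RatFunc K) m) * X + C (algebraMap K (RatFunc K) k ^ 2) -
          C RatFunc.X *
            (X ^ 3 + C (algebraMap K (RatFunc K) k) * X + C (algebraMap K (RatFunc K) m))) =
      algebraMap (RatFunc K) (AlgebraicClosure (RatFunc K))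
        ((-4 * algebraMap K (RatFunc K) k ^ 3 - 27 * algebraMap K (RatFunc K) m ^ 2) *
          (RatFunc.X ^ 3 + 16 * algebraMap K (RatFunc K) k * RatFunc.X +
              64 * algebraMap K (RatFunc K) m) ^ 2) :=
  stmt19_general k m
end
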